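/- arXiv:2012.06495 — 10 statements merged into one kernel-verified Lean document; each statement's English description precedes it below -/
import Mathlib

section
/- Let I and n be positive integers with I dividing n, let l be a nonnegative integer, and let b be a real number such that both b and l/I lie in [0,1) and |b − l/I| < 1/(I·(n+1)). Then ⌊(n+1)·b⌋/n = ⌊(n+1)·(l/I)⌋/n = l/I. -/
/-! Write `n = I * m`. Then `(n + 1) * (l / I) = l * m + l / I` with `0 ≤ l / I < 1`, so its floor
is `l * m`, and `(l * m) / n = l / I`. Multiplying the approximation by `n + 1` puts `(n + 1) * b`
within `1 / I` of `l * m + l / I`, i.e. strictly between `l * m + (l - 1) / I` and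
`l * m + (l + 1) / I`; as `l + 1 ≤ I` (and `b ≥ 0` when `l = 0`) it has the same floor. -/

lemma abs_mul_sub_mul_lt_one_div {a b c d : ℝ} (hc : 0 < c) (h : |b - a| < 1 / (d * c)) :
    |c * b - c * a| < 1 / d := by
  rw [← mul_sub, abs_mul, abs_of_pos hc]
  calc c * |b - a| < c * (1 / (d * c)) := mul_lt_mul_of_pos_left h hc
    _ = 1 / d := by field_simp

lemma natCast_mul_add_one_mul_div (I m l : ℕ) (hI : 0 < I) :
    (((I * m : ℕ) : ℝ) + 1) * ((l : ℝ) / I) = l * m + l / I := by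
  have : (I : ℝ) ≠ 0 := by positivity
  push_cast
  field_simp

lemma floor_eq_of_abs_sub_lt_one_div {I l m : ℕ} {x : ℝ} (hlI : l < I) (hx0 : 0 ≤ x)
    (hx : |x - (l * m + l / I)| < 1 / I) : ⌊x⌋ = ((l * m : ℕ) : ℤ) := by
  have hI : (0 : ℝ) < I := by exact_mod_cast (Nat.zero_le l).trans_lt hlI
  obtain ⟨hlo, hhi⟩ := abs_lt.mp hx
  have hl_succ : ((l : ℝ) + 1) / I ≤ 1 := (div_le_one hI).mpr (by exact_mod_cast hlI)
  rw [Int.floor_eq_iff]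
  push_cast
  constructor
  · rcases Nat.eq_zero_or_pos l with rfl | hl
    · simpa using hx0
    · have : (1 : ℝ) / I ≤ l / I := by gcongr; exact_mod_cast hl
      linarith
  · have : (l : ℝ) / I + 1 / I = (l + 1) / I := by ring
    linarith

theorem approximation_I_general (I n : ℕ) (hn : 0 < n) (hdvd : I ∣ n) (l : ℕ)
    (b : ℝ) (hb : b ∈ Set.Ico (0 : ℝ) 1) (hl : (l : ℝ) / I ∈ Set.Ico (0 : ℝ) 1)
    (happ : |b - (l : ℝ) / I| < 1 / ((I : ℝ) * ((n : ℝ) + 1))) :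
    (⌊((n : ℝ) + 1) * b⌋ : ℝ) / n = (⌊((n : ℝ) + 1) * ((l : ℝ) / I)⌋ : ℝ) / n ∧
      (⌊((n : ℝ) + 1) * ((l : ℝ) / I)⌋ : ℝ) / n = (l : ℝ) / I := by
  obtain ⟨m, rfl⟩ := hdvd
  have hI : 0 < I := Nat.pos_of_mul_pos_right hn
  have hm : 0 < m := Nat.pos_of_mul_pos_left hn
  have hlI : l < I := by
    have := hl.2
    rwa [div_lt_one (by exact_mod_cast hI), Nat.cast_lt] at this
  have hsplit := natCast_mul_add_one_mul_div I m l hI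
  have hfloor_l : ⌊(((I * m : ℕ) : ℝ) + 1) * ((l : ℝ) / I)⌋ = ((l * m : ℕ) : ℤ) :=
    floor_eq_of_abs_sub_lt_one_div hlI (by positivity) (by rw [hsplit, sub_self, abs_zero]; positivity)
  have hfloor_b : ⌊(((I * m : ℕ) : ℝ) + 1) * b⌋ = ((l * m : ℕ) : ℤ) := by
    refine floor_eq_of_abs_sub_lt_one_div hlI (mul_nonneg (by positivity) hb.1) ?_
    rw [← hsplit]
    exact abs_mul_sub_mul_lt_one_div (by positivity) happ
  rw [hfloor_b, hfloor_l]
  refine ⟨rfl, ?_⟩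
  push_cast
  field_simp

theorem approximation_I (I n : ℕ) (hI : 0 < I) (hn : 0 < n) (hdvd : I ∣ n) (l : ℕ)
    (b : ℝ) (hb : b ∈ Set.Ico (0 : ℝ) 1) (hl : (l : ℝ) / I ∈ Set.Ico (0 : ℝ) 1)
    (happ : |b - (l : ℝ) / I| < 1 / ((I : ℝ) * ((n : ℝ) + 1))) :
    (⌊((n : ℝ) + 1) * b⌋ : ℝ) / n = (⌊((n : ℝ) + 1) * ((l : ℝ) / I)⌋ : ℝ) / n ∧
      (⌊((n : ℝ) + 1) * ((l : ℝ) / I)⌋ : ℝ) / n = (l : ℝ) / I :=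
  approximation_I_general I n hn hdvd l b hb hl happ
end

section
/- Let n be a positive integer, b a real number, and b_n = m/n with m an integer, such that |b − b_n| = ε/n. Then: (1) if ε < 1 − b then ⌊(n+1)b⌋/n ≤ b_n; (2) if ε ≤ b then ⌊(n+1)b⌋/n ≥ b_n; (3) if ε < min{b, 1−b} then ⌊(n+1)b⌋/n = b_n. -/
/-! Multiplying by `n` gives `|n b - m| = ε`, and `(n + 1) b = n b + b` lies within `ε` of
`m + b`: it stays below `m + 1` when `ε < 1 - b` and does not drop below `m` when `ε ≤ b`. -/

lemma abs_mul_sub_eq_of_abs_sub_div_eq {n b m ε : ℝ} (hn : 0 < n) (h : |b - m / n| = ε / n) :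
    |n * b - m| = ε := by
  have hscale : n * b - m = n * (b - m / n) := by field_simp
  rw [hscale, abs_mul, abs_of_pos hn, h, mul_div_cancel₀ _ hn.ne']

lemma Int.floor_add_le_of_sub_le {x b ε : ℝ} {m : ℤ} (hx : x - m ≤ ε) (h : ε < 1 - b) :
    ⌊x + b⌋ ≤ m :=
  Int.floor_le_iff.2 (by linarith)

lemma Int.le_floor_add_of_sub_le {x b ε : ℝ} {m : ℤ} (hx : m - x ≤ ε) (h : ε ≤ b) :
    m ≤ ⌊x + b⌋ :=
  Int.le_floor.2 (by linarith)

theorem inequal (n : ℕ) (hn : 0 < n) (b : ℝ) (m : ℤ) (bn ε : ℝ)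
    (hbn : bn = (m : ℝ) / n) (hε : |b - bn| = ε / n) :
    (ε < 1 - b → (⌊((n : ℝ) + 1) * b⌋ : ℝ) / n ≤ bn) ∧
    (ε ≤ b → (⌊((n : ℝ) + 1) * b⌋ : ℝ) / n ≥ bn) ∧
    (ε < min b (1 - b) → (⌊((n : ℝ) + 1) * b⌋ : ℝ) / n = bn) := by
  have hn' : (0 : ℝ) < n := by exact_mod_cast hn
  subst hbn
  obtain ⟨habove, hbelow⟩ := abs_sub_le_iff.1 (abs_mul_sub_eq_of_abs_sub_div_eq hn' hε).le
  have hsplit : ((n : ℝ) + 1) * b = n * b + b := by ring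
  have hupper (h : ε < 1 - b) : (⌊((n : ℝ) + 1) * b⌋ : ℝ) / n ≤ m / n := by
    rw [hsplit]
    exact div_le_div_of_nonneg_right (Int.cast_le.2 (Int.floor_add_le_of_sub_le habove h)) hn'.le
  have hlower (h : ε ≤ b) : (m : ℝ) / n ≤ (⌊((n : ℝ) + 1) * b⌋ : ℝ) / n := by
    rw [hsplit]
    exact div_le_div_of_nonneg_right (Int.cast_le.2 (Int.le_floor_add_of_sub_le hbelow h)) hn'.le
  exact ⟨hupper, hlower, fun h =>
    le_antisymm (hupper (lt_min_iff.1 h).2) (hlower (lt_min_iff.1 h).1.le)⟩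
end

section
/- For any positive integers n, l, any real number d, and any rational number r with n·r ∈ ℤ and r ≤ 1, the inequality r − l + l·⌊(n+1)d⌋/n ≥ ⌊(n+1)(r − l + l·d)⌋/n holds. -/
/-!
Write `F = ⌊(n + 1) d⌋` and `n r = m`. Since `(n + 1) d < F + 1` and `l > 0`, the number
`(n + 1)(r - l + l d)` is less than `(n + 1) r - (n + 1) l + l (F + 1)`, and `(n + 1) r ≤ m + 1`
because `r ≤ 1`. The floor is therefore at most the integer `m - n l + l F`, which is `n` times the
left-hand side.
-/

theorem floor_add_one_mul_sub_add_mul_le {n l m : ℤ} (hl : 0 < l) {r : ℝ} (hm : n * r = m)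
    (hr : r ≤ 1) (d : ℝ) :
    ⌊(n + 1) * (r - l + l * d)⌋ ≤ m - n * l + l * ⌊(n + 1) * d⌋ := by
  rw [Int.floor_le_iff]
  push_cast
  have hd : l * ((n + 1) * d) < l * (⌊(n + 1) * d⌋ + 1) :=
    mul_lt_mul_of_pos_left (Int.lt_floor_add_one _) (by exact_mod_cast hl)
  linarith

theorem main_inequality (n l : ℕ) (hn : 0 < n) (hl : 0 < l) (d : ℝ) (r : ℚ)
    (hZ : ∃ m : ℤ, (n : ℚ) * r = m) (hr : r ≤ 1) :
    (r : ℝ) - l + l * (⌊((n : ℝ) + 1) * d⌋ : ℝ) / n ≥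
      (⌊((n : ℝ) + 1) * ((r : ℝ) - l + l * d)⌋ : ℝ) / n := by
  obtain ⟨m, hm⟩ := hZ
  have hm' : ((n : ℤ) : ℝ) * r = m := by exact_mod_cast hm
  have key := floor_add_one_mul_sub_add_mul_le (l := l) (by exact_mod_cast hl) hm'
    (by exact_mod_cast hr) d
  push_cast at key hm'
  rw [ge_iff_le, div_le_iff₀ (by positivity)]
  calc (⌊((n : ℝ) + 1) * ((r : ℝ) - l + l * d)⌋ : ℝ)
      ≤ m - n * l + l * ⌊((n : ℝ) + 1) * d⌋ := by exact_mod_cast key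
    _ = ((r : ℝ) - l + l * ⌊((n : ℝ) + 1) * d⌋ / n) * n := by
      rw [← hm']
      field_simp
end

section
/- Let C be a finitely generated commutative monoid (with a finite set of generators C₁,…,C_r), let S be a set with a transitive action of C, and let T ⊆ S be a subset closed under the action of C. Then T can be covered by finitely many orbits of C, i.e., there exist t₁,…,t_k ∈ T with T = ⋃ᵢ (tᵢ + C). -/
/-!
Choose a surjection `π : ℕⁿ → C` from the generators and a base point `x₀`. The exponent vectors
`m` with `π m +ᵥ x₀ ∈ T` form an ideal of the monoid `ℕⁿ`, which by Dickson's lemma is generated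
by finitely many `m₁, …, m_k`; then `T` is the union of the orbits of the `π mᵢ +ᵥ x₀`.
-/

theorem AddMonoid.FG.exists_finsupp_surjective (C : Type*) [AddCommMonoid C] [AddMonoid.FG C] :
    ∃ (n : ℕ) (π : (Fin n →₀ ℕ) →+ C), Function.Surjective π := by
  obtain ⟨n, f, hf⟩ := Module.Finite.exists_fin' ℕ C
  let e := Finsupp.linearEquivFunOnFinite ℕ ℕ (Fin n)
  exact ⟨n, (f ∘ₗ e.toLinearMap).toAddMonoidHom, hf.comp e.surjective⟩

theorem AddAction.exists_finset_eq_biUnion_orbit_of_wellQuasiOrderedLE {M C S : Type*}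
    [AddCommMonoid M] [PartialOrder M] [WellQuasiOrderedLE M] [CanonicallyOrderedAdd M]
    [AddMonoid C] [AddAction C S] (π : M →+ C) (x₀ : S) (hπ : ∀ s : S, ∃ m, π m +ᵥ x₀ = s)
    {T : Set S} (hT : ∀ t ∈ T, ∀ c : C, c +ᵥ t ∈ T) :
    ∃ F : Finset S, ↑F ⊆ T ∧ T = ⋃ t ∈ F, orbit C t := by
  let I : AddSemigroupIdeal M :=
    { carrier := {m | π m +ᵥ x₀ ∈ T}
      vadd_mem' := fun a m hm => by simpa [add_vadd] using hT _ hm (π a) }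
  obtain ⟨G, hG⟩ := AddSemigroupIdeal.fg_iff.1 (AddSemigroupIdeal.fg_of_wellQuasiOrderedLE I)
  have hI : ∀ m, π m +ᵥ x₀ ∈ T ↔ ∃ a, ∃ g ∈ G, a + g = m := fun m => by
    change m ∈ I ↔ _
    rw [hG, AddSemigroupIdeal.mem_closure'']
    simp only [Finset.mem_coe]
  have hGT : ∀ g ∈ G, π g +ᵥ x₀ ∈ T := fun g hg => (hI g).2 ⟨0, g, hg, zero_add g⟩
  classical
  refine ⟨G.image (π · +ᵥ x₀), ?_, ?_⟩
  · rw [Finset.coe_image, Set.image_subset_iff]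
    exact hGT
  · ext s
    obtain ⟨m, rfl⟩ := hπ s
    simp only [Set.mem_iUnion, Finset.mem_image, exists_prop, mem_orbit_iff]
    constructor
    · intro hm
      obtain ⟨a, g, hg, rfl⟩ := (hI m).1 hm
      exact ⟨_, ⟨g, hg, rfl⟩, π a, by rw [map_add, add_vadd]⟩
    · rintro ⟨_, ⟨g, hg, rfl⟩, c, hc⟩
      rw [← hc]
      exact hT _ (hGT g hg) c

theorem fg_monoid_orbits (C S : Type*) [AddCommMonoid C] [AddMonoid.FG C] [AddAction C S]
    (htrans : ∃ x0 : S, ∀ s : S, ∃ c : C, c +ᵥ x0 = s)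
    (T : Set S) (hT : ∀ t ∈ T, ∀ c : C, c +ᵥ t ∈ T) :
    ∃ F : Finset S, ↑F ⊆ T ∧ T = ⋃ t ∈ F, {s : S | ∃ c : C, c +ᵥ t = s} := by
  obtain ⟨x₀, hx₀⟩ := htrans
  obtain ⟨n, π, hπ⟩ := AddMonoid.FG.exists_finsupp_surjective C
  refine AddAction.exists_finset_eq_biUnion_orbit_of_wellQuasiOrderedLE π x₀ (fun s => ?_) hT
  obtain ⟨c, rfl⟩ := hx₀ s
  obtain ⟨m, rfl⟩ := hπ c
  exact ⟨m, rfl⟩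
end

section
/- Let 𝔑 be a finite set of positive integers and 𝔯 a finite set of rational numbers in [0,1] containing 1. Define Γ(𝔑,Φ) to be the set of rational numbers of the form b = 1 − r/l + (1/l)·∑_{n∈𝔑} m_n/(n+1) lying in [0,1], where r ∈ 𝔯, l is a positive integer, and the m_n are nonnegative integers. Then Γ(𝔑,Φ) = Φ(𝔯'), the hyperstandard set associated with 𝔯' = {r − ∑_{n∈𝔑} m_n/(n+1) : r ∈ 𝔯, m_n ∈ ℤ≥0} ∩ [0,+∞), and 𝔯' is a finite set of rational numbers in [0,1]. -/
/-!
Writing `s = ∑ n ∈ N, m n / (n + 1) ≥ 0`, one has `1 - r / l + s / l = 1 - (r - s) / l`, and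
with `l ≥ 1` and `r - s ≤ 1` this lies in `[0, 1]` exactly when `r - s ≥ 0`; so both sets are the
numbers `1 - r' / l` with `r' = r - s ∈ [0, 1]`. Such `r'` form a finite set because `s ≤ r ≤ 1`
forces `m n ≤ n + 1` for `n ∈ N`, leaving finitely many relevant values of `m`.
-/

open Finset

lemma sum_cast_div_succ_nonneg (N : Finset ℕ) (m : ℕ → ℕ) :
    0 ≤ ∑ n ∈ N, (m n : ℚ) / (n + 1) :=
  sum_nonneg fun _ _ => by positivity

lemma le_mul_succ_of_sum_cast_div_succ_le {N : Finset ℕ} {m : ℕ → ℕ} {C : ℚ}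
    (hC : ∑ n ∈ N, (m n : ℚ) / (n + 1) ≤ C) {n : ℕ} (hn : n ∈ N) :
    m n ≤ ⌈C⌉₊ * (n + 1) := by
  have hterm : (m n : ℚ) / (n + 1) ≤ C :=
    (single_le_sum (fun _ _ => by positivity) hn).trans hC
  have hm : (m n : ℚ) ≤ ⌈C⌉₊ * (n + 1) :=
    calc (m n : ℚ) ≤ C * (n + 1) := (div_le_iff₀ (by positivity)).1 hterm
      _ ≤ ⌈C⌉₊ * (n + 1) := by gcongr; exact Nat.le_ceil C
  exact_mod_cast hm

theorem finite_setOf_sum_cast_div_succ_le (N : Finset ℕ) (C : ℚ) :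
    {s : ℚ | s ≤ C ∧ ∃ m : ℕ → ℕ, s = ∑ n ∈ N, (m n : ℚ) / (n + 1)}.Finite := by
  let bounded : Set (N → ℕ) := Set.univ.pi fun n => Set.Iic (⌈C⌉₊ * (n + 1))
  have hbounded : bounded.Finite := Set.Finite.pi fun _ => Set.finite_Iic _
  refine (hbounded.image fun f => ∑ n : N, (f n : ℚ) / (n + 1)).subset ?_
  rintro _ ⟨hC, m, rfl⟩
  refine ⟨fun n => m n, fun n _ => le_mul_succ_of_sum_cast_div_succ_le hC n.2, ?_⟩
  exact sum_coe_sort N fun n => (m n : ℚ) / (n + 1)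

lemma one_sub_div_add_one_div_mul {K : Type*} [Field K] (r s l : K) (hl : l ≠ 0) :
    1 - r / l + 1 / l * s = 1 - (r - s) / l := by
  field_simp
  ring

lemma one_sub_div_natCast_mem_Icc_iff {K : Type*} [Field K] [LinearOrder K] [IsStrictOrderedRing K]
    {x : K} (hx : x ≤ 1) {l : ℕ} (hl : 0 < l) :
    1 - x / l ∈ Set.Icc (0 : K) 1 ↔ 0 ≤ x := by
  have hl' : (1 : K) ≤ l := by exact_mod_cast hl
  have hlpos : (0 : K) < l := by positivity
  rw [Set.mem_Icc, sub_nonneg, sub_le_self_iff, div_le_one hlpos, le_div_iff₀ hlpos, zero_mul]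
  exact ⟨fun h => h.2, fun h => ⟨hx.trans hl', h⟩⟩

theorem every_sN_Phi_hyperstandard_general (N : Finset ℕ)
    (R : Finset ℚ) (hR : ∀ r ∈ R, r ∈ Set.Icc (0 : ℚ) 1) :
    let R' : Set ℚ :=
      {r' | 0 ≤ r' ∧ ∃ r ∈ R, ∃ m : ℕ → ℕ, r' = r - ∑ n ∈ N, (m n : ℚ) / (n + 1)}
    R'.Finite ∧ R' ⊆ Set.Icc (0 : ℚ) 1 ∧
      {b : ℚ | b ∈ Set.Icc (0 : ℚ) 1 ∧ ∃ r ∈ R, ∃ l : ℕ, 0 < l ∧ ∃ m : ℕ → ℕ,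
          b = 1 - r / l + (1 / l) * ∑ n ∈ N, (m n : ℚ) / (n + 1)} =
        {b : ℚ | ∃ r' ∈ R', ∃ l : ℕ, 0 < l ∧ b = 1 - r' / l} := by
  intro R'
  have sub_sum_le_one {r : ℚ} (hr : r ∈ R) (m : ℕ → ℕ) :
      r - ∑ n ∈ N, (m n : ℚ) / (n + 1) ≤ 1 := by
    linarith [(hR r hr).2, sum_cast_div_succ_nonneg N m]
  have hR'_Icc : R' ⊆ Set.Icc 0 1 := by
    rintro _ ⟨h0, r, hr, m, rfl⟩
    exact ⟨h0, sub_sum_le_one hr m⟩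
  have hR'_finite : R'.Finite := by
    refine (R.finite_toSet.image2 (· - ·) (finite_setOf_sum_cast_div_succ_le N 1)).subset ?_
    rintro _ ⟨h0, r, hr, m, rfl⟩
    exact ⟨r, hr, _, ⟨by linarith [(hR r hr).2], m, rfl⟩, rfl⟩
  refine ⟨hR'_finite, hR'_Icc, Set.ext fun b => ⟨?_, ?_⟩⟩
  · rintro ⟨hb, r, hr, l, hl, m, rfl⟩
    rw [one_sub_div_add_one_div_mul r _ (l : ℚ) (Nat.cast_ne_zero.2 hl.ne')] at hb ⊢
    have h0 := (one_sub_div_natCast_mem_Icc_iff (sub_sum_le_one hr m) hl).1 hb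
    exact ⟨_, ⟨h0, r, hr, m, rfl⟩, l, hl, rfl⟩
  · rintro ⟨_, ⟨h0, r, hr, m, rfl⟩, l, hl, rfl⟩
    refine ⟨(one_sub_div_natCast_mem_Icc_iff (sub_sum_le_one hr m) hl).2 h0, r, hr, l, hl, m, ?_⟩
    exact (one_sub_div_add_one_div_mul r _ (l : ℚ) (Nat.cast_ne_zero.2 hl.ne')).symm

theorem every_sN_Phi_hyperstandard (N : Finset ℕ) (hN : ∀ n ∈ N, 0 < n)
    (R : Finset ℚ) (hR : ∀ r ∈ R, r ∈ Set.Icc (0 : ℚ) 1) (h1 : (1 : ℚ) ∈ R) :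
    let R' : Set ℚ :=
      {r' | 0 ≤ r' ∧ ∃ r ∈ R, ∃ m : ℕ → ℕ, r' = r - ∑ n ∈ N, (m n : ℚ) / (n + 1)}
    R'.Finite ∧ R' ⊆ Set.Icc (0 : ℚ) 1 ∧
      {b : ℚ | b ∈ Set.Icc (0 : ℚ) 1 ∧ ∃ r ∈ R, ∃ l : ℕ, 0 < l ∧ ∃ m : ℕ → ℕ,
          b = 1 - r / l + (1 / l) * ∑ n ∈ N, (m n : ℚ) / (n + 1)} =
        {b : ℚ | ∃ r' ∈ R', ∃ l : ℕ, 0 < l ∧ b = 1 - r' / l} :=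
  every_sN_Phi_hyperstandard_general N R hR
end

section
/- Let 𝔑 be a finite set of positive integers and 𝔯 a finite set of rational numbers in [0,1] with 1 ∈ 𝔯. Then the set Γ(𝔑,Φ) satisfies the descending chain condition with 1 as its only accumulation point; equivalently, for every ε > 0, the set Γ(𝔑,Φ) ∩ [0, 1−ε] is finite. Moreover if 𝔑 ≠ ∅ then 1 ∈ Γ(𝔑,Φ). -/
/-!
If `b = 1 - r/l + (1/l) ∑ mₙ/(n+1)` satisfies `b ≤ 1 - ε`, then `l (1 - b) = r - ∑ mₙ/(n+1) ≤ 1`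
forces `l ≤ 1/ε`. With `l` bounded, the denominators of `r/l` and of `1/(l(n+1))` all divide one
integer `D`, so `b` lies on the finite grid `(1/D)ℤ ∩ [0, 1]`. A strictly decreasing sequence in
`Γ` would put infinitely many points below its second term `f 1 < 1`.
-/

open Set

def gammaSet (N : Finset ℕ) (R : Finset ℚ) : Set ℚ :=
  {b | b ∈ Icc (0 : ℚ) 1 ∧ ∃ r ∈ R, ∃ l : ℕ, 0 < l ∧ ∃ m : ℕ → ℕ,
    b = 1 - r / l + (1 / l) * ∑ n ∈ N, (m n : ℚ) / (n + 1)}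

theorem not_exists_strictAnti_of_finite_inter_Iic {α : Type*} [LinearOrder α] {S : Set α} {c : α}
    (hfin : ∀ a < c, (S ∩ Iic a).Finite) (hle : ∀ x ∈ S, x ≤ c) :
    ¬ ∃ f : ℕ → α, StrictAnti f ∧ ∀ i, f i ∈ S := by
  rintro ⟨f, hf, hfS⟩
  have hlt : f 1 < c := (hf zero_lt_one).trans_le (hle _ (hfS 0))
  refine (hfin _ hlt).not_infinite (infinite_of_injective_forall_mem (f := fun i => f (i + 1))
    (fun i j hij => by simpa using hf.injective hij) fun i => ⟨hfS _, ?_⟩)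
  exact hf.antitone (Nat.le_add_left 1 i)

theorem one_div_mem_zmultiples_of_dvd {K : Type*} [Field K] [CharZero K] {k D : ℕ}
    (hk : k ∣ D) (hD : D ≠ 0) :
    (1 / k : K) ∈ AddSubgroup.zmultiples (1 / D : K) := by
  obtain ⟨c, rfl⟩ := hk
  have hc : (c : K) ≠ 0 := by exact_mod_cast right_ne_zero_of_mul hD
  refine ⟨c, ?_⟩
  change (c : ℤ) • _ = _
  rw [natCast_zsmul, nsmul_eq_mul, Nat.cast_mul, mul_one_div, div_mul_cancel_right₀ hc, one_div]

theorem finite_zmultiples_inter_Icc {K : Type*} [Field K] [LinearOrder K] [IsStrictOrderedRing K]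
    {D : ℕ} (hD : 0 < D) :
    ((AddSubgroup.zmultiples (1 / D : K) : Set K) ∩ Icc 0 1).Finite := by
  refine ((finite_Icc (0 : ℤ) D).image fun k => k • (1 / D : K)).subset ?_
  rintro _ ⟨⟨k, rfl⟩, h0, h1⟩
  have hDK : (0 : K) < D := by exact_mod_cast hD
  simp only [zsmul_eq_mul, mul_one_div, le_div_iff₀ hDK, zero_mul, div_le_one₀ hDK] at h0 h1
  exact ⟨k, ⟨by exact_mod_cast h0, by exact_mod_cast h1⟩, rfl⟩

theorem gammaTerm_mem_zmultiples (N : Finset ℕ) (r : ℚ) (m : ℕ → ℕ) {l D : ℕ} (hl : 0 < l)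
    (hD : D ≠ 0) (hr : l * r.den ∣ D) (hN : ∀ n ∈ N, l * (n + 1) ∣ D) :
    1 - r / l + (1 / l) * ∑ n ∈ N, (m n : ℚ) / (n + 1) ∈ AddSubgroup.zmultiples (1 / D : ℚ) := by
  have hsplit : 1 - r / l + (1 / l) * ∑ n ∈ N, (m n : ℚ) / (n + 1) =
      (1 : ℚ) / (1 : ℕ) - r.num • ((1 : ℚ) / (l * r.den : ℕ)) +
        ∑ n ∈ N, m n • ((1 : ℚ) / (l * (n + 1) : ℕ)) := by
    have hl' : (l : ℚ) ≠ 0 := by positivity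
    have hr' : r = r.num / r.den := (Rat.num_div_den r).symm
    rw [Finset.mul_sum]
    push_cast
    congr 1
    · rw [zsmul_eq_mul]; nth_rw 1 [hr']; field_simp
    · refine Finset.sum_congr rfl fun n _ => ?_
      rw [nsmul_eq_mul]; field_simp
  rw [hsplit]
  exact add_mem (sub_mem (one_div_mem_zmultiples_of_dvd (one_dvd D) hD)
    (zsmul_mem (one_div_mem_zmultiples_of_dvd hr hD) _))
    (sum_mem fun n hn => nsmul_mem (one_div_mem_zmultiples_of_dvd (hN n hn) hD) _)

theorem natCast_le_inv_one_sub {r S a : ℚ} {l : ℕ} (hl : 0 < l) (hr : r ≤ 1) (hS : 0 ≤ S)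
    (ha : a < 1) (hb : 1 - r / l + (1 / l) * S ≤ a) :
    (l : ℚ) ≤ (1 - a)⁻¹ := by
  have hlq : (0 : ℚ) < l := by exact_mod_cast hl
  have hmul : (l : ℚ) * (1 - a) ≤ r - S := by
    have := mul_le_mul_of_nonneg_left hb hlq.le
    field_simp at this ⊢
    linarith
  rw [le_inv_comm₀ hlq (sub_pos.2 ha), inv_eq_one_div, le_div_iff₀ hlq]
  linarith

theorem finite_gammaSet_inter_Iic (N : Finset ℕ) {R : Finset ℚ} (hR : ∀ r ∈ R, r ≤ 1) {a : ℚ}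
    (ha : a < 1) : (gammaSet N R ∩ Iic a).Finite := by
  set K := ⌈(1 - a)⁻¹⌉₊
  set D := K.factorial * ((∏ r ∈ R, r.den) * ∏ n ∈ N, (n + 1))
  have hD : 0 < D := by positivity
  refine (finite_zmultiples_inter_Icc (K := ℚ) hD).subset ?_
  rintro _ ⟨⟨hb, r, hr, l, hl, m, rfl⟩, hba⟩
  have hS : (0 : ℚ) ≤ ∑ n ∈ N, (m n : ℚ) / (n + 1) := by positivity
  have hlK : l ≤ K :=
    Nat.cast_le.1 ((natCast_le_inv_one_sub hl (hR r hr) hS ha hba).trans (Nat.le_ceil _))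
  have hlD : l ∣ K.factorial := Nat.dvd_factorial hl hlK
  refine ⟨gammaTerm_mem_zmultiples N r m hl hD.ne'
    (mul_dvd_mul hlD (dvd_mul_of_dvd_left (Finset.dvd_prod_of_mem _ hr) _))
    (fun n hn => mul_dvd_mul hlD (dvd_mul_of_dvd_right (Finset.dvd_prod_of_mem _ hn) _)), hb⟩

theorem one_mem_gammaSet {N : Finset ℕ} {R : Finset ℚ} (hN : N.Nonempty) (h1 : (1 : ℚ) ∈ R) :
    (1 : ℚ) ∈ gammaSet N R := by
  obtain ⟨n₀, hn₀⟩ := hN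
  refine ⟨⟨zero_le_one, le_rfl⟩, 1, h1, 1, one_pos, fun n => if n = n₀ then n + 1 else 0, ?_⟩
  rw [Finset.sum_eq_single_of_mem n₀ hn₀ fun n _ hn => by simp [hn]]
  simp [Nat.cast_add_one_ne_zero]

theorem accumulation_one_general (N : Finset ℕ)
    (R : Finset ℚ) (hR : ∀ r ∈ R, r ∈ Set.Icc (0 : ℚ) 1) (h1 : (1 : ℚ) ∈ R) :
    let Γ : Set ℚ :=
      {b | b ∈ Set.Icc (0 : ℚ) 1 ∧ ∃ r ∈ R, ∃ l : ℕ, 0 < l ∧ ∃ m : ℕ → ℕ,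
          b = 1 - r / l + (1 / l) * ∑ n ∈ N, (m n : ℚ) / (n + 1)}
    (¬ ∃ f : ℕ → ℚ, StrictAnti f ∧ ∀ i, f i ∈ Γ) ∧
      (∀ ε : ℚ, 0 < ε → (Γ ∩ Set.Icc 0 (1 - ε)).Finite) ∧
      (N.Nonempty → (1 : ℚ) ∈ Γ) := by
  intro Γ
  have hfin : ∀ a < 1, (Γ ∩ Iic a).Finite :=
    fun a ha => finite_gammaSet_inter_Iic N (fun r hr => (hR r hr).2) ha
  exact ⟨not_exists_strictAnti_of_finite_inter_Iic hfin fun b hb => hb.1.2,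
    fun ε hε => (hfin _ (sub_lt_self 1 hε)).subset (inter_subset_inter_right _ Icc_subset_Iic_self),
    fun hN => one_mem_gammaSet hN h1⟩

theorem accumulation_one (N : Finset ℕ) (hN : ∀ n ∈ N, 0 < n)
    (R : Finset ℚ) (hR : ∀ r ∈ R, r ∈ Set.Icc (0 : ℚ) 1) (h1 : (1 : ℚ) ∈ R) :
    let Γ : Set ℚ :=
      {b | b ∈ Set.Icc (0 : ℚ) 1 ∧ ∃ r ∈ R, ∃ l : ℕ, 0 < l ∧ ∃ m : ℕ → ℕ,
          b = 1 - r / l + (1 / l) * ∑ n ∈ N, (m n : ℚ) / (n + 1)}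
    (¬ ∃ f : ℕ → ℚ, StrictAnti f ∧ ∀ i, f i ∈ Γ) ∧
      (∀ ε : ℚ, 0 < ε → (Γ ∩ Set.Icc 0 (1 - ε)).Finite) ∧
      (N.Nonempty → (1 : ℚ) ∈ Γ) :=
  accumulation_one_general N R hR h1
end

section
/- Let n be a positive integer and let b, b⁺ ∈ [0,1] with b⁺ ∈ ℤ/n (i.e., n·b⁺ is an integer). Let b' be the largest element of Γ({n},Φ) that is ≤ b (a best lower approximation). If b⁺ ≥ b', then b⁺ satisfies the complement inequality with respect to b: b⁺ ≥ 1 when b = 1, and b⁺ ≥ ⌊(n+1)b⌋/n when b < 1. -/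
/-!
Both inequalities come from comparing `b'` with the single grid point `m / (n + 1)`,
`m = ⌊(n + 1) b⌋`, which lies in `Γ({n}, Φ)` (take `r = 1`, `l = 1`) and is `≤ b`; maximality
gives `m / (n + 1) ≤ b' ≤ b⁺`. For `b = 1` this point is `1`. For `b < 1` we have `m ≤ n`, and
then no multiple of `1 / n` lies in `[m / (n + 1), m / n)`, so `b⁺ ∈ ℤ / n` forces `m / n ≤ b⁺`.
-/

/-- The set `Γ({n}, Φ)` of the hyperstandard construction, with `R` the finite set `𝔯`. -/
def hyperstandardSet (n : ℕ) (R : Finset ℚ) : Set ℚ :=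
  {x | x ∈ Set.Icc (0 : ℚ) 1 ∧ ∃ r ∈ R, ∃ l : ℕ, 0 < l ∧ ∃ m : ℕ,
    x = 1 - r / l + (1 / l) * ((m : ℚ) / (n + 1))}

theorem div_succ_mem_hyperstandardSet {n : ℕ} {R : Finset ℚ} (h1 : (1 : ℚ) ∈ R) {m : ℕ}
    (hm : m ≤ n + 1) : (m : ℚ) / (n + 1) ∈ hyperstandardSet n R := by
  refine ⟨⟨by positivity, div_le_one_of_le₀ (by exact_mod_cast hm) (by positivity)⟩,
    1, h1, 1, one_pos, m, by simp⟩

theorem Int.le_of_mul_le_mul_succ {m k : ℤ} {n : ℕ} (hm : m ≤ n) (h : m * n ≤ k * (n + 1)) :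
    m ≤ k := by
  by_contra! hk
  nlinarith

theorem div_le_of_div_succ_le_div {n m : ℕ} {k : ℤ} (hn : 0 < n) (hm : m ≤ n)
    (h : (m : ℝ) / (n + 1) ≤ k / n) : (m : ℝ) / n ≤ k / n := by
  have hnR : (0 : ℝ) < n := by exact_mod_cast hn
  rw [div_le_div_iff₀ (by positivity) hnR] at h
  have hmk : (m : ℤ) ≤ k := Int.le_of_mul_le_mul_succ (by exact_mod_cast hm) (by exact_mod_cast h)
  gcongr
  exact_mod_cast hmk

theorem natFloor_mul_succ_le {n : ℕ} {b : ℝ} (hb : b < 1) : ⌊((n : ℝ) + 1) * b⌋₊ ≤ n := by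
  rw [← Nat.lt_succ_iff, Nat.floor_lt' n.succ_ne_zero]
  push_cast
  nlinarith

theorem one_of_def_two_for_B_general (n : ℕ) (hn : 0 < n)
    (R : Finset ℚ) (h1 : (1 : ℚ) ∈ R)
    (b bp : ℝ) (hb : b ∈ Set.Icc (0 : ℝ) 1)
    (hZ : ∃ m : ℤ, (n : ℝ) * bp = m)
    (b' : ℚ)
    (hmax : ∀ x : ℚ,
        (x ∈ Set.Icc (0 : ℚ) 1 ∧ ∃ r ∈ R, ∃ l : ℕ, 0 < l ∧ ∃ m : ℕ,
          x = 1 - r / l + (1 / l) * ((m : ℚ) / (n + 1))) → (x : ℝ) ≤ b → x ≤ b')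
    (hge : (b' : ℝ) ≤ bp) :
    (b = 1 → 1 ≤ bp) ∧ (b < 1 → (⌊((n : ℝ) + 1) * b⌋ : ℝ) / n ≤ bp) := by
  have grid_le : ∀ m : ℕ, m ≤ n + 1 → (m : ℝ) ≤ (n + 1) * b → (m : ℝ) / (n + 1) ≤ bp := by
    intro m hm hmb
    have hx := hmax _ (div_succ_mem_hyperstandardSet h1 hm) (by
      push_cast
      rwa [div_le_iff₀' (by positivity)])
    have hx' : ((m : ℚ) / (n + 1) : ℚ) ≤ (b' : ℝ) := by exact_mod_cast hx
    push_cast at hx'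
    exact hx'.trans hge
  constructor
  · rintro rfl
    simpa [(by positivity : (n : ℝ) + 1 ≠ 0)] using grid_le (n + 1) le_rfl (by simp)
  · intro hb1
    obtain ⟨k, hk⟩ := hZ
    have hbp : bp = k / n := by
      rw [← hk]
      field_simp
    have hb0 : 0 ≤ ((n : ℝ) + 1) * b := mul_nonneg (by positivity) hb.1
    set m := ⌊((n : ℝ) + 1) * b⌋₊
    have hmn : m ≤ n := natFloor_mul_succ_le hb1
    have hm : (m : ℝ) / (n + 1) ≤ k / n := hbp ▸ grid_le m (by omega) (Nat.floor_le hb0)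
    rw [← Int.natCast_floor_eq_floor hb0, Int.cast_natCast, hbp]
    exact div_le_of_div_succ_le_div hn hmn hm

theorem one_of_def_two_for_B (n : ℕ) (hn : 0 < n)
    (R : Finset ℚ) (hR : ∀ r ∈ R, r ∈ Set.Icc (0 : ℚ) 1) (h1 : (1 : ℚ) ∈ R)
    (b bp : ℝ) (hb : b ∈ Set.Icc (0 : ℝ) 1) (hbp : bp ∈ Set.Icc (0 : ℝ) 1)
    (hZ : ∃ m : ℤ, (n : ℝ) * bp = m)
    (b' : ℚ)
    (hb'mem : b' ∈ Set.Icc (0 : ℚ) 1 ∧ ∃ r ∈ R, ∃ l : ℕ, 0 < l ∧ ∃ m : ℕ,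
        (b' : ℚ) = 1 - r / l + (1 / l) * ((m : ℚ) / (n + 1)))
    (hb'le : (b' : ℝ) ≤ b)
    (hmax : ∀ x : ℚ,
        (x ∈ Set.Icc (0 : ℚ) 1 ∧ ∃ r ∈ R, ∃ l : ℕ, 0 < l ∧ ∃ m : ℕ,
          x = 1 - r / l + (1 / l) * ((m : ℚ) / (n + 1))) → (x : ℝ) ≤ b → x ≤ b')
    (hge : (b' : ℝ) ≤ bp) :
    (b = 1 → 1 ≤ bp) ∧ (b < 1 → (⌊((n : ℝ) + 1) * b⌋ : ℝ) / n ≤ bp) :=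
  one_of_def_two_for_B_general n hn R h1 b bp hb hZ b' hmax hge
end

section
/- Let n, l be positive integers, d ≤ 1 a real number, and r ≤ 1 a rational number with n·r ∈ ℤ. Define the rounding ⟨x⟩_n = 1 if x = 1 and ⟨x⟩_n = ⌊(n+1)x⌋/n otherwise. Let b = r − l + l·d correspond to d under the inverse adjunction b ↦ r − l + l·b, and let b^{[n]} = r − l + l·⟨d⟩_n. Then ⟨b⟩_n ≤ b^{[n]}. -/
/-!
If `d = 1` then `b = r` and `b^{[n]} = r`, and `⟨r⟩_n ≤ r` because `(n+1)r = nr + r` with `nr ∈ ℤ`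
and `r ≤ 1`. Otherwise `b^{[n]} = r - l + l⌊(n+1)d⌋/n`, and writing `(n+1)d = ⌊(n+1)d⌋ + f`,
`(n+1)b = (nr - nl + l⌊(n+1)d⌋) + (r - l + lf)` with the first summand an integer and the second
`< 1`; so `⌊(n+1)b⌋ ≤ n b^{[n]}`, while `⟨x⟩_n ≤ ⌊(n+1)x⌋/n` for every `x`.
-/

/-- The rounding `⟨x⟩_n` of the paper. -/
noncomputable def nRound (n : ℕ) (x : ℝ) : ℝ :=
  if x = 1 then 1 else (⌊((n : ℝ) + 1) * x⌋ : ℝ) / n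

theorem nRound_le_floor_div {n : ℕ} (hn : 0 < n) (x : ℝ) :
    nRound n x ≤ (⌊((n : ℝ) + 1) * x⌋ : ℝ) / n := by
  unfold nRound
  split_ifs with hx
  · have hn' : (0 : ℝ) < n := by exact_mod_cast hn
    rw [hx, mul_one, le_div_iff₀ hn', one_mul, ← Nat.cast_add_one, Int.floor_natCast]
    push_cast
    linarith
  · exact le_rfl

theorem nRound_le_self {n : ℕ} (hn : 0 < n) {r : ℝ} (hr : r ≤ 1) {m : ℤ} (hm : (n : ℝ) * r = m) :
    nRound n r ≤ r := by
  unfold nRound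
  split_ifs with hr1
  · exact hr1.ge
  have hn' : (0 : ℝ) < n := by exact_mod_cast hn
  have hfloor_r : ⌊r⌋ ≤ 0 := Int.floor_le_iff.mpr (by simpa using lt_of_le_of_ne hr hr1)
  have hsplit : ((n : ℝ) + 1) * r = m + r := by rw [add_mul, hm, one_mul]
  rw [hsplit, Int.floor_intCast_add, div_le_iff₀ hn', mul_comm, hm]
  push_cast
  linarith [(Int.cast_nonpos (R := ℝ)).mpr hfloor_r]

theorem floor_succ_mul_adjoint_le {n l : ℕ} (hl : 0 < l) {r : ℝ} (hr : r ≤ 1) {m : ℤ}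
    (hm : (n : ℝ) * r = m) (d : ℝ) :
    ⌊((n : ℝ) + 1) * (r - l + l * d)⌋ ≤ m - n * l + l * ⌊((n : ℝ) + 1) * d⌋ := by
  set t := ((n : ℝ) + 1) * d
  have hl' : (0 : ℝ) < l := by exact_mod_cast hl
  -- the fractional part `t - ⌊t⌋` is `< 1`, so `r - l + l (t - ⌊t⌋) < 1`
  have hfract : l * (t - ⌊t⌋) < l := by
    nlinarith [Int.lt_floor_add_one t]
  rw [Int.floor_le_iff]
  push_cast
  have : ((n : ℝ) + 1) * (r - l + l * d) = n * r - n * l + l * t + (r - l) := by ring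
  rw [this, hm]
  linarith

theorem nRound_adjoint_le {n l : ℕ} (hn : 0 < n) (hl : 0 < l) {r : ℝ} (hr : r ≤ 1) {m : ℤ}
    (hm : (n : ℝ) * r = m) (d : ℝ) :
    nRound n (r - l + l * d) ≤ r - l + l * ((⌊((n : ℝ) + 1) * d⌋ : ℝ) / n) := by
  have hn' : (0 : ℝ) < n := by exact_mod_cast hn
  refine (nRound_le_floor_div hn _).trans ?_
  rw [div_le_iff₀ hn']
  have hfloor : (⌊((n : ℝ) + 1) * (r - l + l * d)⌋ : ℝ) ≤ m - n * l + l * ⌊((n : ℝ) + 1) * d⌋ := by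
    exact_mod_cast floor_succ_mul_adjoint_le hl hr hm d
  have hexpand : (r - l + l * ((⌊((n : ℝ) + 1) * d⌋ : ℝ) / n)) * n
      = n * r - n * l + l * ⌊((n : ℝ) + 1) * d⌋ := by
    field_simp
  rw [hexpand, hm]
  exact hfloor

theorem inverse_n_monotonicity_general (n l : ℕ) (hn : 0 < n) (hl : 0 < l)
    (d : ℝ) (r : ℚ) (hr : r ≤ 1) (hZ : ∃ m : ℤ, (n : ℚ) * r = m)
    (b bn : ℝ) (hb : b = (r : ℝ) - l + l * d)
    (hbn : bn = (r : ℝ) - l + l * (if d = 1 then (1 : ℝ) else (⌊((n : ℝ) + 1) * d⌋ : ℝ) / n)) :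
    (if b = 1 then (1 : ℝ) else (⌊((n : ℝ) + 1) * b⌋ : ℝ) / n) ≤ bn := by
  obtain ⟨m, hm⟩ := hZ
  have hmR : (n : ℝ) * r = m := by exact_mod_cast congrArg (Rat.cast (K := ℝ)) hm
  have hrR : (r : ℝ) ≤ 1 := by exact_mod_cast hr
  change nRound n b ≤ bn
  subst hb hbn
  split_ifs with hd
  · subst hd
    simpa using nRound_le_self hn hrR hmR
  · exact nRound_adjoint_le hn hl hrR hmR d

theorem inverse_n_monotonicity (n l : ℕ) (hn : 0 < n) (hl : 0 < l)
    (d : ℝ) (hd : d ≤ 1) (r : ℚ) (hr : r ≤ 1) (hZ : ∃ m : ℤ, (n : ℚ) * r = m)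
    (b bn : ℝ) (hb : b = (r : ℝ) - l + l * d)
    (hbn : bn = (r : ℝ) - l + l * (if d = 1 then (1 : ℝ) else (⌊((n : ℝ) + 1) * d⌋ : ℝ) / n)) :
    (if b = 1 then (1 : ℝ) else (⌊((n : ℝ) + 1) * b⌋ : ℝ) / n) ≤ bn :=
  inverse_n_monotonicity_general n l hn hl d r hr hZ b bn hb hbn
end

section
/- Let 𝔯 and 𝔯'' be finite sets of rational numbers in [0,1] with 1 ∈ 𝔯 ∩ 𝔯'', and define 𝔯' = {r' − l(1−r) : r ∈ 𝔯'', r' ∈ 𝔯, l a positive integer, r' − l(1−r) ≥ 0}. Then 𝔯' is a finite set of rational numbers in [0,1] containing 1, and for any parameters r ∈ 𝔯'' and positive integer l, if b ∈ Φ(𝔯) with b ≤ r, then d = 1 − r/l + b/l belongs to Φ(𝔯'). -/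
/-!
Writing `b = 1 - r'/m`, one has `1 - r/l + b/l = 1 - (r' - m(1 - r))/(ml)`, and `b ≤ r` is exactly
`r' - m(1 - r) ≥ 0`, so the new numerator lies in `𝔯'`. Finiteness of `𝔯'` holds because for fixed
`r < 1` only finitely many `l` keep `r' - l(1 - r)` nonnegative, while for `r = 1` the value is `r'`.
-/

theorem Set.finite_image_sub_natCast_mul_of_nonneg {K : Type*} [Field K] [LinearOrder K]
    [IsStrictOrderedRing K] [FloorSemiring K] (a : K) {c : K} (hc : 0 ≤ c) :
    ((fun l : ℕ => a - l * c) '' {l | 0 ≤ a - l * c}).Finite := by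
  rcases hc.eq_or_lt with rfl | hc
  · exact (Set.finite_singleton a).subset (by rintro _ ⟨l, -, rfl⟩; simp)
  · refine ((Set.finite_Iic ⌈a / c⌉₊).subset fun l (hl : 0 ≤ a - l * c) => ?_).image _
    have : (l : K) ≤ a / c := (le_div_iff₀ hc).2 (by linarith)
    exact Set.mem_Iic.2 (Nat.cast_le.1 (this.trans (Nat.le_ceil _)))

theorem one_sub_div_add_one_sub_div_div {K : Type*} [Field K] (r r' : K) {l m : K}
    (hl : l ≠ 0) (hm : m ≠ 0) :
    1 - r / l + (1 - r' / m) / l = 1 - (r' - m * (1 - r)) / (m * l) := by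
  field_simp
  ring

theorem sub_mul_one_sub_nonneg_of_one_sub_div_le {K : Type*} [Field K] [LinearOrder K]
    [IsStrictOrderedRing K] {r r' m : K} (hm : 0 < m) (h : 1 - r' / m ≤ r) :
    0 ≤ r' - m * (1 - r) := by
  have : r' - m * (1 - r) = m * (r - (1 - r' / m)) := by field_simp; ring
  rw [this]
  exact mul_nonneg hm.le (sub_nonneg.2 h)

theorem direct_hyperstandard (R R'' : Finset ℚ)
    (hR : ∀ r ∈ R, r ∈ Set.Icc (0 : ℚ) 1) (hR'' : ∀ r ∈ R'', r ∈ Set.Icc (0 : ℚ) 1)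
    (h1R : (1 : ℚ) ∈ R) (h1R'' : (1 : ℚ) ∈ R'') :
    let R' : Set ℚ :=
      {x | ∃ r ∈ R'', ∃ r' ∈ R, ∃ l : ℕ, 0 < l ∧ x = r' - l * (1 - r) ∧ 0 ≤ x}
    R'.Finite ∧ R' ⊆ Set.Icc (0 : ℚ) 1 ∧ (1 : ℚ) ∈ R' ∧
      ∀ r ∈ R'', ∀ l : ℕ, 0 < l →
        ∀ b : ℚ, (∃ r' ∈ R, ∃ m : ℕ, 0 < m ∧ b = 1 - r' / m) → b ≤ r →
          ∃ r' ∈ R', ∃ m : ℕ, 0 < m ∧ 1 - r / l + b / l = 1 - r' / m := by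
  intro R'
  refine ⟨?finite, ?bounds, ⟨1, h1R'', 1, h1R, 1, one_pos, by norm_num, zero_le_one⟩, ?closure⟩
  case finite =>
    refine (R''.finite_toSet.biUnion fun r hr => R.finite_toSet.biUnion fun r' _ =>
      Set.finite_image_sub_natCast_mul_of_nonneg r' (sub_nonneg.2 (hR'' r hr).2)).subset ?_
    rintro x ⟨r, hr, r', hr', l, -, rfl, hx⟩
    exact Set.mem_biUnion hr (Set.mem_biUnion hr' ⟨l, hx, rfl⟩)
  case bounds =>
    rintro x ⟨r, hr, r', hr', l, -, rfl, hx⟩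
    have : 0 ≤ (l : ℚ) * (1 - r) := mul_nonneg l.cast_nonneg (sub_nonneg.2 (hR'' r hr).2)
    exact ⟨hx, by linarith [(hR r' hr').2]⟩
  case closure =>
    rintro r hr l hl b ⟨r', hr', m, hm, rfl⟩ hbr
    have hm' : (0 : ℚ) < m := Nat.cast_pos.2 hm
    refine ⟨r' - m * (1 - r), ⟨r, hr, r', hr', m, hm, rfl,
      sub_mul_one_sub_nonneg_of_one_sub_div_le hm' hbr⟩, m * l, Nat.mul_pos hm hl, ?_⟩
    push_cast
    exact one_sub_div_add_one_sub_div_div r r' (by positivity) hm'.ne'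
end

section
/- Let Γ ⊆ [0,1] be a set satisfying the descending chain condition and 𝔯'' a finite subset of [0,1]. Then the set Γ' = {1 − r/l + b/l : r ∈ 𝔯'', l a positive integer, b ∈ Γ, r ≥ b} also satisfies the descending chain condition. -/
/-!
Write an element of `Γ'` as `1 - (r - b) / l`. Below any level `a < 1` we have
`(r - b) / l ≥ 1 - a` with `r - b ≤ 1`, so only the finitely many denominators
`l ≤ (1 - a)⁻¹` occur. Hence `Γ' ∩ Iic a` is a finite union of images of `Γ` under the
increasing maps `b ↦ 1 - r / l + b / l`, each well-founded. Since `Γ' ≤ 1`, the tail of a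
descending sequence in `Γ'` lies below its second term, which is `< 1`.
-/

open Set

theorem Set.isWF_of_isWF_inter_Iic {α : Type*} [LinearOrder α] {s : Set α} {c : α}
    (hs : s ⊆ Iic c) (h : ∀ a < c, (s ∩ Iic a).IsWF) : s.IsWF := by
  rw [isWF_iff_no_descending_seq]
  intro f hf hmem
  have hf1 : f 1 < c := (hf zero_lt_one).trans_le (hs (hmem 0))
  refine isWF_iff_no_descending_seq.1 (h _ hf1) (fun n => f (n + 1))
    (hf.comp_strictMono (strictMono_id.add_const 1)) fun n => ⟨hmem _, ?_⟩
  exact hf.antitone (by omega)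

/-- The set `Γ'` of the paper, with `R` for `𝔯''`. -/
def directSet (R Γ : Set ℝ) : Set ℝ :=
  {x | ∃ r ∈ R, ∃ l : ℕ, 0 < l ∧ ∃ b ∈ Γ, b ≤ r ∧ x = 1 - r / l + b / l}

lemma directSet_subset_Iic (R Γ : Set ℝ) : directSet R Γ ⊆ Iic 1 := by
  rintro _ ⟨r, -, l, -, b, -, hbr, rfl⟩
  have : b / l ≤ r / l := by gcongr
  simp only [mem_Iic]
  linarith

lemma natCast_le_inv_of_one_sub_div_add_div_le {r b a : ℝ} {l : ℕ} (hb : 0 ≤ b) (hr : r ≤ 1)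
    (hl : 0 < l) (ha : a < 1) (hx : 1 - r / l + b / l ≤ a) : (l : ℝ) ≤ (1 - a)⁻¹ := by
  have hl' : (0 : ℝ) < l := by exact_mod_cast hl
  rw [le_inv_comm₀ hl' (by linarith), ← one_div, le_div_iff₀ hl']
  have hgap : 1 - a ≤ (r - b) / l := by
    have : 1 - r / l + b / l = 1 - (r - b) / l := by ring
    linarith
  rw [le_div_iff₀ hl'] at hgap
  linarith

lemma isWF_image_one_sub_div_add_div {Γ : Set ℝ} (hΓ : Γ.IsWF) (r : ℝ) (l : ℕ) :
    ((fun b => 1 - r / l + b / l) '' Γ).IsWF := by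
  refine (hΓ.isPWO.image_of_monotone fun b c hbc => ?_).isWF
  gcongr

lemma directSet_inter_Iic_subset {R Γ : Set ℝ} (hR : R.Finite) (hΓ0 : ∀ b ∈ Γ, 0 ≤ b)
    (hR1 : ∀ r ∈ R, r ≤ 1) {a : ℝ} (ha : a < 1) :
    directSet R Γ ∩ Iic a ⊆ ⋃ r ∈ hR.toFinset, ⋃ l ∈ Finset.Icc 1 ⌈(1 - a)⁻¹⌉₊,
      (fun b => 1 - r / l + b / l) '' Γ := by
  rintro _ ⟨⟨r, hr, l, hl, b, hb, -, rfl⟩, hx⟩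
  have hlN := natCast_le_inv_of_one_sub_div_add_div_le (hΓ0 b hb) (hR1 r hr) hl ha hx
  simp only [mem_iUnion, Finset.mem_Icc, hR.mem_toFinset]
  exact ⟨r, hr, l, ⟨hl, by exact_mod_cast hlN.trans (Nat.le_ceil _)⟩, b, hb, rfl⟩

theorem isWF_directSet {R Γ : Set ℝ} (hR : R.Finite) (hΓ : Γ.IsWF) (hΓ0 : ∀ b ∈ Γ, 0 ≤ b)
    (hR1 : ∀ r ∈ R, r ≤ 1) : (directSet R Γ).IsWF := by
  refine isWF_of_isWF_inter_Iic (directSet_subset_Iic R Γ) fun a ha => ?_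
  refine IsWF.mono ?_ (directSet_inter_Iic_subset hR hΓ0 hR1 ha)
  simp only [Finset.isWF_bUnion]
  exact fun r _ l _ => isWF_image_one_sub_div_add_div hΓ r l

theorem direct_dcc (Γ : Set ℝ) (hΓ : Γ ⊆ Set.Icc 0 1)
    (hdcc : ¬ ∃ f : ℕ → ℝ, StrictAnti f ∧ ∀ i, f i ∈ Γ)
    (R'' : Set ℝ) (hfin : R''.Finite) (hR'' : R'' ⊆ Set.Icc 0 1) :
    ¬ ∃ f : ℕ → ℝ, StrictAnti f ∧ ∀ i,
      f i ∈ {x : ℝ | ∃ r ∈ R'', ∃ l : ℕ, 0 < l ∧ ∃ b ∈ Γ, b ≤ r ∧ x = 1 - r / l + b / l} := by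
  have hΓwf : Γ.IsWF := isWF_iff_no_descending_seq.2 fun f hf hmem => hdcc ⟨f, hf, hmem⟩
  have hwf := isWF_directSet hfin hΓwf (fun b hb => (hΓ hb).1) fun r hr => (hR'' hr).2
  rintro ⟨f, hf, hmem⟩
  exact isWF_iff_no_descending_seq.1 hwf f hf hmem
end
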